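/- arXiv:1109.2107 — 2 statements merged into one kernel-verified Lean document; each statement's English description precedes it below -/
import Mathlib

section
/- Let K be a field of characteristic p > 0 that is not perfect (i.e., there exists t ∈ K with no p-th root in K), and let A = K[x,y]/(x^p, y^p - x - t). Then the canonical projection A → A/rad(A) does not split as a K-algebra homomorphism. -/
open MvPolynomial in
/-- The algebra `A = K[x,y]/(x^p, y^p - x - t)` where `x, y` are the variables `X 0, X 1`. -/
abbrev quotAlg (K : Type*) [Field K] (p : ℕ) (t : K) : Type _ :=
  MvPolynomial (Fin 2) K ⧸
    (Ideal.span {X 0 ^ p, X 1 ^ p - X 0 - C t} : Ideal (MvPolynomial (Fin 2) K))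

set_option maxHeartbeats 2000000 in
set_option synthInstance.maxHeartbeats 1000000 in
open Polynomial in
/-- Let `K` be a field of characteristic `p > 0` and `t ∈ K` an element with no `p`-th root in
`K`.  For `A = K[x,y]/(x^p, y^p - x - t)`, the canonical projection `A → A/rad A` does not
split as a `K`-algebra homomorphism. -/
theorem stmt_5 (K : Type*) [Field K] (p : ℕ) [CharP K p] (hp : 0 < p) (t : K)
    (ht : ¬ ∃ s : K, s ^ p = t) :
    ¬ ∃ μ : (quotAlg K p t ⧸ (⊥ : Ideal (quotAlg K p t)).jacobson) →ₐ[K] quotAlg K p t,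
      (Ideal.Quotient.mkₐ K ((⊥ : Ideal (quotAlg K p t)).jacobson)).comp μ =
        AlgHom.id K (quotAlg K p t ⧸ (⊥ : Ideal (quotAlg K p t)).jacobson) := by
  rintro ⟨μ, -⟩
  have hpr : p.Prime := (CharP.char_is_prime_or_zero K p).resolve_right hp.ne'
  haveI : Fact p.Prime := ⟨hpr⟩
  set f : K[X] := X ^ (p * p) - C (t ^ p) with hf
  set h : K[X] := X ^ p - C t with hh
  have hfh : h ^ p = f := by
    rw [hh, hf, sub_pow_char, ← pow_mul, ← C_pow]
  have hirr : Irreducible h := X_pow_sub_C_irreducible_of_prime hpr (fun b hb => ht ⟨b, hb⟩)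
  set B := AdjoinRoot f with hB
  set φ : MvPolynomial (Fin 2) K →ₐ[K] B :=
    MvPolynomial.aeval ![AdjoinRoot.mk f h, AdjoinRoot.root f] with hφ
  have hφ0 : φ (MvPolynomial.X 0) = AdjoinRoot.mk f h := by simp [hφ]
  have hφ1 : φ (MvPolynomial.X 1) = AdjoinRoot.mk f X := by simp [hφ, AdjoinRoot.mk_X]
  have halg : ∀ c : K, algebraMap K B c = AdjoinRoot.mk f (C c) := fun c => rfl
  have hker' : (Ideal.span {MvPolynomial.X 0 ^ p,
      MvPolynomial.X 1 ^ p - MvPolynomial.X 0 - MvPolynomial.C t} :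
      Ideal (MvPolynomial (Fin 2) K)) ≤ RingHom.ker (φ : MvPolynomial (Fin 2) K →+* B) := by
    rw [Ideal.span_le]
    rintro q (rfl | rfl)
    · show φ _ = 0
      rw [map_pow, hφ0, ← map_pow, hfh, AdjoinRoot.mk_self]
    · show φ _ = 0
      rw [map_sub, map_sub, map_pow, hφ1, hφ0, MvPolynomial.aeval_C, halg,
        ← map_pow, ← map_sub, ← map_sub]
      rw [show (X : K[X]) ^ p - h - C t = 0 by rw [hh]; ring, map_zero]
  have hker : ∀ a ∈ (Ideal.span {MvPolynomial.X 0 ^ p,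
      MvPolynomial.X 1 ^ p - MvPolynomial.X 0 - MvPolynomial.C t} :
      Ideal (MvPolynomial (Fin 2) K)), φ a = 0 := fun a ha => hker' ha
  set φbar : quotAlg K p t →ₐ[K] B := Ideal.Quotient.liftₐ _ φ hker with hφbar
  set mkI := Ideal.Quotient.mk (Ideal.span {MvPolynomial.X 0 ^ p,
      MvPolynomial.X 1 ^ p - MvPolynomial.X 0 - MvPolynomial.C t} :
      Ideal (MvPolynomial (Fin 2) K)) with hmkI
  have hx_mem : (mkI (MvPolynomial.X 0) : quotAlg K p t) ∈ (⊥ : Ideal (quotAlg K p t)).jacobson := by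
    apply Ideal.radical_le_jacobson
    refine Ideal.mem_radical_iff.mpr ⟨p, ?_⟩
    rw [Ideal.mem_bot, ← map_pow, Ideal.Quotient.eq_zero_iff_mem]
    exact Ideal.subset_span (Set.mem_insert _ _)
  set π := Ideal.Quotient.mkₐ K ((⊥ : Ideal (quotAlg K p t)).jacobson) with hπ
  set a := μ (π (mkI (MvPolynomial.X 1))) with haa
  have hyquot : mkI (MvPolynomial.X 1) ^ p = mkI (MvPolynomial.X 0) + algebraMap K _ t := by
    have h0 : mkI (MvPolynomial.X 1 ^ p - MvPolynomial.X 0 - MvPolynomial.C t) = 0 := by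
      rw [Ideal.Quotient.eq_zero_iff_mem]
      exact Ideal.subset_span (Set.mem_insert_of_mem _ rfl)
    rw [map_sub, map_sub, sub_eq_zero, sub_eq_iff_eq_add'] at h0
    rw [← map_pow, h0]
    rfl
  have hyp2 : (π (mkI (MvPolynomial.X 1))) ^ p = algebraMap K _ t := by
    rw [← map_pow, hyquot, map_add]
    have hz : π (mkI (MvPolynomial.X 0)) = 0 := by
      rw [hπ, Ideal.Quotient.mkₐ_eq_mk, Ideal.Quotient.eq_zero_iff_mem]
      exact hx_mem
    rw [hz, zero_add, AlgHom.commutes]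
  have ha : a ^ p = algebraMap K _ t := by rw [haa, ← map_pow, hyp2, AlgHom.commutes]
  have hb : φbar a ^ p = algebraMap K B t := by rw [← map_pow, ha, AlgHom.commutes]
  obtain ⟨g, hg⟩ := AdjoinRoot.mk_surjective (φbar a)
  have hdvd : f ∣ g ^ p - C t := by
    rw [← AdjoinRoot.mk_eq_zero, map_sub, map_pow, hg, hb, halg, sub_self]
  have key : g ^ p - C t = (g - X) ^ p + h := by
    rw [sub_pow_char, hh]; ring
  have hdvd2 : h ∣ g - X := by
    refine hirr.prime.dvd_of_dvd_pow (n := p) ?_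
    have h1 : h ∣ g ^ p - C t := dvd_trans (hfh ▸ dvd_pow_self h hpr.ne_zero) hdvd
    have : (g - X) ^ p = (g ^ p - C t) - h := by rw [key]; ring
    rw [this]
    exact dvd_sub h1 dvd_rfl
  obtain ⟨q, hq⟩ := hdvd2
  have hdvd3 : h ^ p ∣ h := by
    have h2 : g ^ p - C t = h ^ p * q ^ p + h := by rw [key, hq, mul_pow]
    have h3 : h ^ p ∣ h ^ p * q ^ p + h := by rw [← h2, hfh]; exact hdvd
    exact (dvd_add_right (Dvd.intro _ rfl)).mp h3
  have hne : h ≠ 0 := hirr.ne_zero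
  have hdeg := Polynomial.natDegree_le_of_dvd hdvd3 hne
  rw [Polynomial.natDegree_pow, hh, Polynomial.natDegree_X_pow_sub_C] at hdeg
  nlinarith [hpr.two_le]
end

section
/- For A = K[x,y]/(x^p, y^p - x - t) where K has characteristic p and t has no p-th root in K, the Jacobson radical of A is the ideal generated by the image of x. -/
open MvPolynomial

theorem Ideal.jacobson_bot_eq_span_singleton_of_isNilpotent {R : Type*} [CommRing R] {x : R}
    (hx : IsNilpotent x) (hmax : (Ideal.span {x}).IsMaximal) :
    (⊥ : Ideal R).jacobson = Ideal.span {x} :=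
  le_antisymm (sInf_le ⟨bot_le, hmax⟩) <|
    (Ideal.span_singleton_le_iff_mem _).2 (Ideal.radical_le_jacobson (mem_nilradical.2 hx))

section AdjoinRoot

variable {R : Type*} [CommRing R] (f : Polynomial R)

noncomputable abbrev evalZeroRoot : MvPolynomial (Fin 2) R →ₐ[R] AdjoinRoot f :=
  aeval ![0, AdjoinRoot.root f]

theorem evalZeroRoot_surjective : Function.Surjective (evalZeroRoot f) := by
  intro z
  obtain ⟨g, rfl⟩ := AdjoinRoot.mk_surjective z
  refine ⟨Polynomial.aeval (X 1) g, ?_⟩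
  rw [← Polynomial.aeval_algHom_apply, aeval_X]
  exact AdjoinRoot.aeval_eq g

theorem ker_evalZeroRoot :
    RingHom.ker (evalZeroRoot f) = Ideal.span {X 0, Polynomial.aeval (X 1) f} := by
  set J : Ideal (MvPolynomial (Fin 2) R) := Ideal.span {X 0, Polynomial.aeval (X 1) f}
  refine le_antisymm ?_ ?_
  · have hroot : Polynomial.aeval (Ideal.Quotient.mkₐ R J (X 1)) f = 0 := by
      rw [Polynomial.aeval_algHom_apply, Ideal.Quotient.mkₐ_eq_mk,
        Ideal.Quotient.eq_zero_iff_mem]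
      exact Ideal.subset_span (by simp)
    set ψ := AdjoinRoot.liftAlgHom f (Algebra.ofId R _) _ hroot
    have hψ : ψ.comp (evalZeroRoot f) = Ideal.Quotient.mkₐ R J := by
      refine MvPolynomial.algHom_ext fun i => ?_
      fin_cases i
      · simpa [ψ] using (Ideal.Quotient.eq_zero_iff_mem.2 (Ideal.subset_span (by simp))).symm
      · simp [ψ]
    intro q hq
    rw [← Ideal.Quotient.eq_zero_iff_mem, ← Ideal.Quotient.mkₐ_eq_mk R, ← hψ, AlgHom.comp_apply,
      RingHom.mem_ker.1 hq, map_zero]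
  · rw [Ideal.span_le]
    rintro q (rfl | rfl)
    · simp
    · simp [← Polynomial.aeval_algHom_apply, AdjoinRoot.aeval_eq]

end AdjoinRoot

theorem isMaximal_span_X_zero_aeval_X_one {K : Type*} [Field K] {f : Polynomial K}
    (hf : Irreducible f) :
    (Ideal.span {X 0, Polynomial.aeval (X 1) f} : Ideal (MvPolynomial (Fin 2) K)).IsMaximal := by
  have := Fact.mk hf
  rw [← ker_evalZeroRoot]
  exact RingHom.ker_isMaximal_of_surjective _ (evalZeroRoot_surjective f)

namespace quotAlg

variable {K : Type*} [Field K] {p : ℕ} {t : K}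

theorem isNilpotent_mk_X_zero :
    IsNilpotent (Ideal.Quotient.mk _ (X 0) : quotAlg K p t) :=
  ⟨p, by rw [← map_pow, Ideal.Quotient.eq_zero_iff_mem]; exact Ideal.subset_span (by simp)⟩

theorem span_mk_X_zero_eq_map :
    Ideal.span {Ideal.Quotient.mk _ (X 0)} =
      (Ideal.span {X 0, X 1 ^ p - C t}).map (Ideal.Quotient.mk _ : _ →+* quotAlg K p t) := by
  have hy : (Ideal.Quotient.mk _ (X 1 ^ p - C t) : quotAlg K p t) = Ideal.Quotient.mk _ (X 0) := by
    rw [Ideal.Quotient.mk_eq_mk_iff_sub_mem, sub_right_comm]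
    exact Ideal.subset_span (by simp)
  rw [Ideal.map_span, Set.image_pair, hy, Set.pair_eq_singleton]

theorem isMaximal_span_mk_X_zero (hp : 0 < p)
    (hirr : Irreducible (Polynomial.X ^ p - Polynomial.C t)) :
    (Ideal.span {Ideal.Quotient.mk _ (X 0)} : Ideal (quotAlg K p t)).IsMaximal := by
  have hJ := isMaximal_span_X_zero_aeval_X_one hirr
  simp only [map_sub, map_pow, Polynomial.aeval_X, Polynomial.aeval_C, algebraMap_eq] at hJ
  rw [span_mk_X_zero_eq_map]
  refine hJ.map_of_surjective_of_ker_le Ideal.Quotient.mk_surjective ?_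
  rw [Ideal.mk_ker, Ideal.span_le]
  rintro q (rfl | rfl)
  · exact Ideal.pow_mem_of_mem _ (Ideal.subset_span (by simp)) p hp
  · rw [sub_right_comm]
    exact Ideal.sub_mem _ (Ideal.subset_span (by simp)) (Ideal.subset_span (by simp))

end quotAlg

open MvPolynomial in
/-- For `A = K[x,y]/(x^p, y^p - x - t)` where `K` has characteristic `p > 0` and `t` has no
`p`-th root in `K`, the Jacobson radical of `A` is the ideal generated by the image of `x`. -/
theorem stmt_7 (K : Type*) [Field K] (p : ℕ) [CharP K p] (hp : 0 < p) (t : K)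
    (ht : ¬ ∃ s : K, s ^ p = t) :
    (⊥ : Ideal (quotAlg K p t)).jacobson =
      Ideal.span {Ideal.Quotient.mk _ (X 0 : MvPolynomial (Fin 2) K)} := by
  have hprime : p.Prime := (CharP.char_is_prime_or_zero K p).resolve_right hp.ne'
  have hirr : Irreducible (Polynomial.X ^ p - Polynomial.C t) :=
    X_pow_sub_C_irreducible_of_prime hprime fun s hs => ht ⟨s, hs⟩
  exact Ideal.jacobson_bot_eq_span_singleton_of_isNilpotent quotAlg.isNilpotent_mk_X_zero
    (quotAlg.isMaximal_span_mk_X_zero hp hirr)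
end
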